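/- arXiv:2405.04844 — 2 statements merged into one kernel-verified Lean document; each statement's English description precedes it below -/
import Mathlib

section
/- Let V be a finite set, r : V → ℝ, and let c ≤ k ≤ |V| be natural numbers. Suppose T* ⊆ V is a top-k set for r (i.e. |T*| = k and r(w) ≤ r(v) for every v ∈ T* and w ∈ V \ T*). Then T* solves the max–min problem: for every subset T ⊆ V with |T| = k, the minimum over all subsets U ⊆ T with |U| = c of ∑_{v ∈ U} r(v) is at most the minimum over all subsets U ⊆ T* with |U| = c of ∑_{v ∈ U} r(v). (Proposition 1: the PRP solution, which returns the top-k items by relevance, is also the max–min / conservative approximation of GPRP.) -/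
/-!
Exchange argument. Take any size-`c` subset `U'` of the top-`k` set `T'`. Keep the part of `U'`
lying in `T` and replace each element of `U' \ T ⊆ T' \ T` by a distinct element of `T \ T'`;
there are enough of these because `|T'| ≤ |T|`. Each replacement lies outside `T'`, so it is no
more relevant than any element of `T'`, and the resulting size-`c` subset of `T` has `r`-sum at
most that of `U'`.
-/

open Finset

section

variable {ι M : Type*} [AddCommMonoid M] [LinearOrder M] [IsOrderedAddMonoid M]

lemma Finset.sum_le_sum_of_card_eq_of_forall_le (f : ι → M) {A B : Finset ι} (hcard : #A = #B)
    (h : ∀ a ∈ A, ∀ b ∈ B, f a ≤ f b) : ∑ a ∈ A, f a ≤ ∑ b ∈ B, f b := by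
  rcases B.eq_empty_or_nonempty with rfl | hB
  · rw [card_empty, card_eq_zero] at hcard
    simp [hcard]
  · calc ∑ a ∈ A, f a ≤ #A • B.inf' hB f :=
          sum_le_card_nsmul _ _ _ fun a ha => le_inf' hB f fun b hb => h a ha b hb
      _ = #B • B.inf' hB f := by rw [hcard]
      _ ≤ ∑ b ∈ B, f b := card_nsmul_le_sum _ _ _ fun b hb => inf'_le f hb

lemma Finset.exists_subset_card_eq_sum_le [DecidableEq ι] (r : ι → M) {T T' U' : Finset ι}
    (hcard : #T' ≤ #T) (hU' : U' ⊆ T') (htop : ∀ v ∈ T', ∀ w ∈ T \ T', r w ≤ r v) :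
    ∃ U ⊆ T, #U = #U' ∧ ∑ v ∈ U, r v ≤ ∑ v ∈ U', r v := by
  have hreplace : #(U' \ T) ≤ #(T \ T') :=
    (card_le_card (sdiff_subset_sdiff hU' le_rfl)).trans (card_sdiff_le_card_sdiff_iff.mpr hcard)
  obtain ⟨A, hA, hAcard⟩ := exists_subset_card_eq hreplace
  have hdisj : Disjoint (U' ∩ T) A :=
    disjoint_left.mpr fun x hx hxA => (mem_sdiff.mp (hA hxA)).2 (hU' (mem_inter.mp hx).1)
  refine ⟨U' ∩ T ∪ A, union_subset inter_subset_right (hA.trans sdiff_subset), ?_, ?_⟩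
  · rw [card_union_of_disjoint hdisj, hAcard, card_inter_add_card_sdiff]
  · rw [sum_union hdisj, ← sum_inter_add_sum_sdiff U' T r]
    exact add_le_add_right (sum_le_sum_of_card_eq_of_forall_le r hAcard fun a ha b hb =>
      htop b (hU' (mem_sdiff.mp hb).1) a (hA ha)) _

end

/-- Proposition 1: a top-k set `T'` for `r` solves the max–min problem: for every
size-`k` subset `T` of `V`, the minimum over size-`c` subsets `U ⊆ T` of `∑_{v ∈ U} r v`
is at most the corresponding minimum over size-`c` subsets of `T'`. -/
theorem prp_is_max_min_solution {ι : Type*} [DecidableEq ι]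
    (V : Finset ι) (r : ι → ℝ) (c k : ℕ) (hck : c ≤ k)
    (T' : Finset ι) (hT'card : T'.card = k)
    (htop : ∀ v ∈ T', ∀ w ∈ V \ T', r w ≤ r v)
    (T : Finset ι) (hTV : T ⊆ V) (hTcard : T.card = k) :
    (T.powersetCard c).inf'
        (Finset.powersetCard_nonempty.mpr (by rw [hTcard]; exact hck))
        (fun U => ∑ v ∈ U, r v) ≤
      (T'.powersetCard c).inf'
        (Finset.powersetCard_nonempty.mpr (by rw [hT'card]; exact hck))
        (fun U => ∑ v ∈ U, r v) := by
  refine le_inf' _ _ fun U' hU' => ?_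
  obtain ⟨hU'T', hU'card⟩ := mem_powersetCard.mp hU'
  obtain ⟨U, hUT, hUcard, hsum⟩ := exists_subset_card_eq_sum_le r (hT'card.trans hTcard.symm).le
    hU'T' fun v hv w hw => htop v hv w (sdiff_subset_sdiff hTV le_rfl hw)
  exact inf'_le_of_le _ (mem_powersetCard.mpr ⟨hUT, hUcard.trans hU'card⟩) hsum
end

section
/- For every ε with 0 < ε < 1 there exist functions r, p : Fin 4 → ℝ with 0 ≤ r(v) ≤ 1 and 0 ≤ p(v) ≤ 1 for all v (namely r = (1, 1, ε, 0) and p = (0.1, 0.2, 0.5, 0)), such that: (a) the set {0,1,2} is a top-3 set for r; (b) the unique maximizer of p on {0,1,2} is item 2, whose relevance is ε; and (c) there exists a subset T ⊆ Fin 4 with |T| = 3 (namely {0,1,3}) whose unique maximizer of p has relevance 1. Consequently, when the final stage deterministically exposes the single item of highest p from the size-3 set it receives, the final utility of the GPRP choice exceeds the final utility of the PRP choice (the top-3 set by r) by 1 − ε. (Proposition 2: the performance gap between PRP and GPRP can be arbitrarily close to c_4 = 1.) -/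
/-!
PRP keeps the three most relevant items `{0, 1, 2}`, but the final stage exposes the item of
highest selection score, and among these that is item `2`, of relevance `ε`. Swapping item `2`
for the irrelevant item `3` makes item `1`, of relevance `1`, the score maximizer, so the
exposed relevance rises from `ε` to `1`.
-/

open Finset

noncomputable section

def relevance (ε : ℝ) : Fin 4 → ℝ := ![1, 1, ε, 0]

def selectionScore : Fin 4 → ℝ := ![0.1, 0.2, 0.5, 0]

variable {ε : ℝ}

lemma relevance_mem_Icc (h0 : 0 ≤ ε) (h1 : ε ≤ 1) (v : Fin 4) :
    0 ≤ relevance ε v ∧ relevance ε v ≤ 1 := by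
  fin_cases v <;> simp [relevance, h0, h1]

lemma selectionScore_mem_Icc (v : Fin 4) : 0 ≤ selectionScore v ∧ selectionScore v ≤ 1 := by
  fin_cases v <;> norm_num [selectionScore]

lemma relevance_le_of_mem_top (h0 : 0 ≤ ε) :
    ∀ v ∈ ({0, 1, 2} : Finset (Fin 4)),
      ∀ w ∈ (univ \ {0, 1, 2} : Finset (Fin 4)), relevance ε w ≤ relevance ε v := by
  simp [relevance, Fin.forall_fin_succ, h0]

lemma selectionScore_lt_two :
    ∀ v ∈ ({0, 1, 2} : Finset (Fin 4)), v ≠ 2 → selectionScore v < selectionScore 2 := by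
  simp only [selectionScore, mem_insert, mem_singleton, forall_eq_or_imp, forall_eq,
    Matrix.cons_val]
  norm_num

lemma selectionScore_lt_one :
    ∀ w ∈ ({0, 1, 3} : Finset (Fin 4)), w ≠ 1 → selectionScore w < selectionScore 1 := by
  simp only [selectionScore, mem_insert, mem_singleton, forall_eq_or_imp, forall_eq,
    Matrix.cons_val]
  norm_num

end

/-- Proposition 2: the performance gap between PRP and GPRP can be arbitrarily close
to `c₄ = 1`.  For every `0 < ε < 1` there are relevances `r = (1, 1, ε, 0)` and
selection scores `p = (0.1, 0.2, 0.5, 0)` on four items such that `{0,1,2}` is a top-3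
set for `r`, the final stage (which deterministically exposes the item of highest `p`)
exposes item `2` of relevance `ε` from it, while another size-3 set (namely `{0,1,3}`)
leads to an exposed item of relevance `1`; the gap in final utility is `1 - ε`. -/
theorem prp_gprp_gap_can_approach_c4 :
    ∀ ε : ℝ, 0 < ε → ε < 1 →
      ∃ r p : Fin 4 → ℝ,
        (r = ![1, 1, ε, 0] ∧ p = ![0.1, 0.2, 0.5, 0]) ∧
        (∀ v, 0 ≤ r v ∧ r v ≤ 1) ∧ (∀ v, 0 ≤ p v ∧ p v ≤ 1) ∧
        -- (a) {0,1,2} is a top-3 set for r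
        (({0, 1, 2} : Finset (Fin 4)).card = 3 ∧
          ∀ v ∈ ({0, 1, 2} : Finset (Fin 4)),
            ∀ w ∈ (Finset.univ \ {0, 1, 2} : Finset (Fin 4)), r w ≤ r v) ∧
        -- (b) the unique maximizer of p on {0,1,2} is item 2, of relevance ε
        ((∀ v ∈ ({0, 1, 2} : Finset (Fin 4)), v ≠ 2 → p v < p 2) ∧ r 2 = ε) ∧
        -- (c) a size-3 subset whose unique maximizer of p has relevance 1,
        -- so the final utility of GPRP exceeds that of PRP by 1 - ε
        (∃ T : Finset (Fin 4), T = ({0, 1, 3} : Finset (Fin 4)) ∧ T.card = 3 ∧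
          ∃ v ∈ T, (∀ w ∈ T, w ≠ v → p w < p v) ∧ r v = 1 ∧ r v - r 2 = 1 - ε) := by
  intro ε hε0 hε1
  refine ⟨relevance ε, selectionScore, ⟨rfl, rfl⟩,
    relevance_mem_Icc hε0.le hε1.le, selectionScore_mem_Icc,
    ⟨by decide, relevance_le_of_mem_top hε0.le⟩, ⟨selectionScore_lt_two, rfl⟩,
    {0, 1, 3}, rfl, by decide, 1, by decide, selectionScore_lt_one, rfl, rfl⟩
end
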